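/- arXiv:math/0203103 — 2 statements merged into one kernel-verified Lean document; each statement's English description precedes it below -/
import Mathlib

section
/- Let a < c < b be real numbers and let ψ : ℝ → ℝ be continuous on [a, b]. Set I = ∫_a^b ψ(x)·(2x−a−b)/(b−a) dx − ∫_a^c ψ(x)·(2x−a−c)/(c−a) dx − ∫_c^b ψ(x)·(2x−c−b)/(b−c) dx. Then |I| ≤ 2·(sup_{x ∈ [a,b]} |ψ(x)|)·((c−a)(b−c)/(b−a)). -/
/-!
Splitting the first integral at `c`, the weight `(2x - a - b)/(b - a)` minus the weight of the
subinterval is affine and vanishes at the outer endpoint: it is `-2(b - c)(x - a)/((b - a)(c - a))`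
on `[a, c]` and `2(c - a)(b - x)/((b - a)(b - c))` on `[c, b]`. Each of these weights has constant
sign and total mass `(c - a)(b - c)/(b - a)`, so each piece is at most `sup |ψ|` times that mass.
-/

open Set intervalIntegral
open MeasureTheory (volume)

theorem le_biSup_of_bddAbove_image {α β : Type*} [ConditionallyCompleteLattice α] {f : β → α}
    {s : Set β} (H : BddAbove (f '' s)) {x : β} (hx : x ∈ s) : f x ≤ ⨆ y ∈ s, f y :=
  le_ciSup₂ (f := fun y (_ : y ∈ s) ↦ f y)
    (H.mono <| iUnion_subset fun _ ↦ range_subset_iff.2 fun hy ↦ mem_image_of_mem f hy) x hx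

theorem abs_integral_mul_le_of_abs_le {ψ g : ℝ → ℝ} {p q M : ℝ} (hpq : p ≤ q)
    (hψ : ∀ x ∈ Icc p q, |ψ x| ≤ M) (hg : ∀ x ∈ Icc p q, 0 ≤ g x)
    (hgi : IntervalIntegrable g volume p q) :
    |∫ x in p..q, ψ x * g x| ≤ M * ∫ x in p..q, g x := by
  rw [← integral_const_mul M g]
  refine norm_integral_le_of_norm_le (f := fun x ↦ ψ x * g x) hpq (.of_forall fun x hx ↦ ?_)
    (hgi.const_mul M)
  have hx : x ∈ Icc p q := Ioc_subset_Icc_self hx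
  rw [Real.norm_eq_abs, abs_mul, abs_of_nonneg (hg x hx)]
  exact mul_le_mul_of_nonneg_right (hψ x hx) (hg x hx)

theorem abs_integral_mul_sub_left_le {ψ : ℝ → ℝ} {p q M : ℝ} (hpq : p ≤ q)
    (hψ : ∀ x ∈ Icc p q, |ψ x| ≤ M) :
    |∫ x in p..q, ψ x * (x - p)| ≤ M * ((q - p) ^ 2 / 2) := by
  have h := abs_integral_mul_le_of_abs_le hpq hψ (fun x hx ↦ sub_nonneg.2 hx.1)
    ((by fun_prop : Continuous fun x : ℝ ↦ x - p).intervalIntegrable p q)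
  simpa [integral_comp_sub_right fun x ↦ x] using h

theorem abs_integral_mul_sub_right_le {ψ : ℝ → ℝ} {p q M : ℝ} (hpq : p ≤ q)
    (hψ : ∀ x ∈ Icc p q, |ψ x| ≤ M) :
    |∫ x in p..q, ψ x * (q - x)| ≤ M * ((q - p) ^ 2 / 2) := by
  have h := abs_integral_mul_le_of_abs_le hpq hψ (fun x hx ↦ sub_nonneg.2 hx.2)
    ((by fun_prop : Continuous fun x : ℝ ↦ q - x).intervalIntegrable p q)
  simpa [integral_comp_sub_left fun x ↦ x] using h

theorem triangle_integral_eq {ψ : ℝ → ℝ} {a b c : ℝ}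
    (hca : c ≠ a) (hbc : b ≠ c) (hba : b ≠ a)
    (h₁ : IntervalIntegrable ψ volume a c)
    (h₂ : IntervalIntegrable ψ volume c b) :
    (∫ x in a..b, ψ x * ((2 * x - a - b) / (b - a))) -
      (∫ x in a..c, ψ x * ((2 * x - a - c) / (c - a))) -
      (∫ x in c..b, ψ x * ((2 * x - c - b) / (b - c))) =
    2 * (c - a) / ((b - a) * (b - c)) * (∫ x in c..b, ψ x * (b - x)) -
      2 * (b - c) / ((b - a) * (c - a)) * ∫ x in a..c, ψ x * (x - a) := by
  have hca' : c - a ≠ 0 := sub_ne_zero.2 hca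
  have hbc' : b - c ≠ 0 := sub_ne_zero.2 hbc
  have hba' : b - a ≠ 0 := sub_ne_zero.2 hba
  have hmul {p q : ℝ} (h : IntervalIntegrable ψ volume p q) (w : ℝ → ℝ)
      (hw : Continuous w) : IntervalIntegrable (fun x ↦ ψ x * w x) volume p q :=
    h.mul_continuousOn hw.continuousOn
  have left : (∫ x in a..c, ψ x * ((2 * x - a - b) / (b - a))) -
      (∫ x in a..c, ψ x * ((2 * x - a - c) / (c - a))) =
      -(2 * (b - c) / ((b - a) * (c - a)) * ∫ x in a..c, ψ x * (x - a)) := by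
    rw [← integral_sub (hmul h₁ _ (by fun_prop)) (hmul h₁ _ (by fun_prop)),
      ← integral_const_mul, ← integral_neg]
    congr 1; ext x; field_simp; ring
  have right : (∫ x in c..b, ψ x * ((2 * x - a - b) / (b - a))) -
      (∫ x in c..b, ψ x * ((2 * x - c - b) / (b - c))) =
      2 * (c - a) / ((b - a) * (b - c)) * ∫ x in c..b, ψ x * (b - x) := by
    rw [← integral_sub (hmul h₂ _ (by fun_prop)) (hmul h₂ _ (by fun_prop)),
      ← integral_const_mul]
    congr 1; ext x; field_simp; ring
  rw [← integral_add_adjacent_intervals (hmul h₁ _ (by fun_prop)) (hmul h₂ _ (by fun_prop))]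
  linear_combination left + right

/-- the sup-norm estimate for the triangle contribution `I`. -/
theorem triangle_integral_sup_bound
    (a b c : ℝ) (hac : a < c) (hcb : c < b)
    (ψ : ℝ → ℝ) (hψ : ContinuousOn ψ (Set.Icc a b))
    (I : ℝ)
    (hI : I = (∫ x in a..b, ψ x * ((2 * x - a - b) / (b - a))) -
      (∫ x in a..c, ψ x * ((2 * x - a - c) / (c - a))) -
      (∫ x in c..b, ψ x * ((2 * x - c - b) / (b - c)))) :
    |I| ≤ 2 * (⨆ x ∈ Set.Icc a b, |ψ x|) * ((c - a) * (b - c) / (b - a)) := by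
  set M := ⨆ x ∈ Icc a b, |ψ x|
  have hM : ∀ x ∈ Icc a b, |ψ x| ≤ M := fun x hx ↦
    le_biSup_of_bddAbove_image (isCompact_Icc.image_of_continuousOn hψ.abs).bddAbove hx
  have hac_sub : Icc a c ⊆ Icc a b := Icc_subset_Icc_right hcb.le
  have hcb_sub : Icc c b ⊆ Icc a b := Icc_subset_Icc_left hac.le
  have hA := abs_integral_mul_sub_left_le hac.le fun x hx ↦ hM x (hac_sub hx)
  have hB := abs_integral_mul_sub_right_le hcb.le fun x hx ↦ hM x (hcb_sub hx)
  have hca : 0 < c - a := sub_pos.2 hac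
  have hbc : 0 < b - c := sub_pos.2 hcb
  have hba : 0 < b - a := by linarith
  have hkl : 0 < 2 * (b - c) / ((b - a) * (c - a)) := by positivity
  have hkr : 0 < 2 * (c - a) / ((b - a) * (b - c)) := by positivity
  rw [hI, triangle_integral_eq hac.ne' hcb.ne' (hac.trans hcb).ne'
    (ContinuousOn.intervalIntegrable_of_Icc hac.le (hψ.mono hac_sub))
    (ContinuousOn.intervalIntegrable_of_Icc hcb.le (hψ.mono hcb_sub))]
  calc _ ≤ 2 * (c - a) / ((b - a) * (b - c)) * |∫ x in c..b, ψ x * (b - x)| +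
        2 * (b - c) / ((b - a) * (c - a)) * |∫ x in a..c, ψ x * (x - a)| := by
        refine (abs_sub _ _).trans_eq ?_
        rw [abs_mul, abs_mul, abs_of_pos hkr, abs_of_pos hkl]
    _ ≤ 2 * (c - a) / ((b - a) * (b - c)) * (M * ((b - c) ^ 2 / 2)) +
        2 * (b - c) / ((b - a) * (c - a)) * (M * ((c - a) ^ 2 / 2)) := by gcongr
    _ = 2 * M * ((c - a) * (b - c) / (b - a)) := by field_simp; ring
end

section
/- There exists a universal constant C such that for every countable family of pairwise disjoint open intervals (a_j, b_j) ⊂ ℝ with a_j·b_j ≥ −1 for every j, one has ∑_j exp(−D_j) ≤ C, where D_j is the infimal hyperbolic distance from i to the geodesic γ_{a_j, b_j}. -/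
/-!
Since `cosh ≤ exp` on `[0, ∞)`, `exp (-dist i z) ≤ 1 / cosh (dist i z) = 2 Im z / (1 + |z|²)`.
On the semicircle `γ_{a,b}` this is at most `sin (arctan b - arctan a) ≤ arctan b - arctan a`,
half the angle under which `γ_{a,b}` is seen from `i`. Disjoint intervals `(a_j, b_j)` have
disjoint images under `arctan`, all inside `(-π/2, π/2)`, so the sum is at most `π`.
-/

open scoped UpperHalfPlane

open Real Set MeasureTheory

lemma Real.cosh_le_exp_of_nonneg {x : ℝ} (hx : 0 ≤ x) : cosh x ≤ exp x := by
  rw [cosh_eq]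
  linarith [exp_le_exp.2 (show -x ≤ x by linarith)]

namespace UpperHalfPlane

lemma exp_neg_dist_I_le (z : ℍ) :
    exp (-dist I z) ≤ 2 * z.im / (1 + z.re ^ 2 + z.im ^ 2) := by
  have hcosh : cosh (dist I z) = (1 + z.re ^ 2 + z.im ^ 2) / (2 * z.im) := by
    rw [cosh_dist, Complex.dist_eq, Complex.sq_norm, Complex.normSq_apply]
    simp only [coe_I, I_im, Complex.sub_re, Complex.sub_im, Complex.I_re, Complex.I_im,
      coe_re, coe_im]
    field_simp [z.im_pos.ne']
    ring
  calc exp (-dist I z) = (exp (dist I z))⁻¹ := exp_neg _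
    _ ≤ (cosh (dist I z))⁻¹ := by
        gcongr
        exact cosh_le_exp_of_nonneg dist_nonneg
    _ = 2 * z.im / (1 + z.re ^ 2 + z.im ^ 2) := by rw [hcosh, inv_div]

end UpperHalfPlane

lemma Real.sin_arctan_sub_arctan (a b : ℝ) :
    sin (arctan b - arctan a) = (b - a) / (√(1 + a ^ 2) * √(1 + b ^ 2)) := by
  rw [sin_sub, sin_arctan, cos_arctan, sin_arctan, cos_arctan]
  field_simp

lemma Real.div_sqrt_mul_sqrt_le_arctan_sub_arctan {a b : ℝ} (hab : a ≤ b) :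
    (b - a) / (√(1 + a ^ 2) * √(1 + b ^ 2)) ≤ arctan b - arctan a := by
  rw [← sin_arctan_sub_arctan]
  exact sin_le (sub_nonneg.2 (arctan_strictMono.monotone hab))

lemma two_mul_div_le_of_sq_add_sq_eq {a b x y : ℝ} (hab : a ≤ b) (hy : 0 ≤ y)
    (h : x ^ 2 + y ^ 2 = (a + b) * x - a * b) :
    2 * y / (1 + x ^ 2 + y ^ 2) ≤ (b - a) / (√(1 + a ^ 2) * √(1 + b ^ 2)) := by
  have hsq : (2 * y * (√(1 + a ^ 2) * √(1 + b ^ 2))) ^ 2 ≤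
      ((b - a) * (1 + x ^ 2 + y ^ 2)) ^ 2 := by
    have hy2 : y ^ 2 = (a + b) * x - a * b - x ^ 2 := by linarith
    have hs : 1 + x ^ 2 + y ^ 2 = 1 - a * b + (a + b) * x := by linarith
    rw [mul_pow, mul_pow, mul_pow, sq_sqrt (by positivity), sq_sqrt (by positivity), mul_pow,
      hs, hy2]
    -- on the circle the difference of the two sides is exactly this square
    nlinarith [sq_nonneg ((2 + a ^ 2 + b ^ 2) * x - (a + b) * (1 + a * b))]
  rw [div_le_div_iff₀ (by positivity) (by positivity)]
  exact (pow_le_pow_iff_left₀ (by positivity) (mul_nonneg (by linarith) (by positivity))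
    two_ne_zero).1 hsq

lemma Metric.exp_neg_infDist_le {α : Type*} [PseudoMetricSpace α] {x : α} {s : Set α}
    (hs : s.Nonempty) {c : ℝ} (hc : 0 < c) (h : ∀ y ∈ s, exp (-dist x y) ≤ c) :
    exp (-Metric.infDist x s) ≤ c := by
  rw [← le_log_iff_exp_le hc, neg_le, Metric.le_infDist hs]
  exact fun y hy => neg_le.1 ((le_log_iff_exp_le hc).2 (h y hy))

namespace UpperHalfPlane

def geodesic (a b : ℝ) : Set ℍ := {z : ℍ | ‖(z : ℂ) - (((a + b) / 2 : ℝ) : ℂ)‖ = (b - a) / 2}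

lemma re_sq_add_im_sq_of_mem_geodesic {a b : ℝ} {z : ℍ} (hz : z ∈ geodesic a b) :
    z.re ^ 2 + z.im ^ 2 = (a + b) * z.re - a * b := by
  have h := congrArg (· ^ 2) hz
  simp only [Complex.sq_norm, Complex.normSq_apply, Complex.sub_re, Complex.sub_im,
    Complex.ofReal_re, Complex.ofReal_im, sub_zero, coe_re, coe_im] at h
  linear_combination h

lemma geodesic_nonempty {a b : ℝ} (hab : a < b) : (geodesic a b).Nonempty := by
  refine ⟨⟨((a + b) / 2 : ℝ) + ((b - a) / 2 : ℝ) * Complex.I, by simpa using hab⟩, ?_⟩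
  simp [geodesic, -Complex.ofReal_sub, abs_of_pos (sub_pos.2 hab)]

lemma exp_neg_dist_I_le_arctan_sub_arctan {a b : ℝ} (hab : a ≤ b) {z : ℍ}
    (hz : z ∈ geodesic a b) : exp (-dist I z) ≤ arctan b - arctan a :=
  (exp_neg_dist_I_le z).trans <|
    (two_mul_div_le_of_sq_add_sq_eq hab z.im_pos.le (re_sq_add_im_sq_of_mem_geodesic hz)).trans
      (div_sqrt_mul_sqrt_le_arctan_sub_arctan hab)

lemma exp_neg_infDist_I_geodesic_le {a b : ℝ} (hab : a < b) :
    exp (-Metric.infDist I (geodesic a b)) ≤ arctan b - arctan a :=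
  Metric.exp_neg_infDist_le (geodesic_nonempty hab) (sub_pos.2 (arctan_strictMono hab))
    fun _ => exp_neg_dist_I_le_arctan_sub_arctan hab.le

end UpperHalfPlane

lemma Monotone.disjoint_Ioo {α β : Type*} [LinearOrder α] [DenselyOrdered α] [LinearOrder β]
    [DenselyOrdered β] {f : α → β} (hf : Monotone f) {a₁ a₂ b₁ b₂ : α}
    (h : Disjoint (Ioo a₁ a₂) (Ioo b₁ b₂)) :
    Disjoint (Ioo (f a₁) (f a₂)) (Ioo (f b₁) (f b₂)) := by
  rw [Set.Ioo_disjoint_Ioo] at h ⊢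
  rw [← hf.map_min, ← hf.map_max]
  exact hf h

lemma sum_sub_le_of_pairwise_disjoint_Ioo {ι : Type*} {a b : ι → ℝ} {m M : ℝ} (hmM : m ≤ M)
    (hab : ∀ i, a i ≤ b i) (hm : ∀ i, m ≤ a i) (hM : ∀ i, b i ≤ M)
    (hdisj : Pairwise fun i j => Disjoint (Ioo (a i) (b i)) (Ioo (a j) (b j))) (u : Finset ι) :
    ∑ i ∈ u, (b i - a i) ≤ M - m := by
  rw [← ENNReal.ofReal_le_ofReal_iff (sub_nonneg.2 hmM),
    ENNReal.ofReal_sum_of_nonneg fun i _ => sub_nonneg.2 (hab i)]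
  calc ∑ i ∈ u, ENNReal.ofReal (b i - a i) = volume (⋃ i ∈ u, Ioo (a i) (b i)) := by
        rw [measure_biUnion_finset (fun i _ j _ hij => hdisj hij) fun _ _ => measurableSet_Ioo]
        simp only [Real.volume_Ioo]
    _ ≤ volume (Icc m M) :=
        measure_mono <| iUnion₂_subset fun i _ =>
          Ioo_subset_Icc_self.trans (Icc_subset_Icc (hm i) (hM i))
    _ = ENNReal.ofReal (M - m) := Real.volume_Icc

/-- there is a universal constant `C` such that for every countable family of
pairwise disjoint open intervals `(a_j, b_j)` with `a_j·b_j ≥ −1`, the sum of `exp(−D_j)` is at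
most `C`, where `D_j` is the hyperbolic distance from `i` to the geodesic `γ_{a_j,b_j}`. -/
theorem sum_exp_neg_dist_spanning_family_bounded :
    ∃ C : ℝ, ∀ a b : ℕ → ℝ, (∀ j, a j < b j) → (∀ j, a j * b j ≥ -1) →
      (Pairwise fun i j => Disjoint (Set.Ioo (a i) (b i)) (Set.Ioo (a j) (b j))) →
      Summable (fun j => Real.exp (-(Metric.infDist UpperHalfPlane.I
          {z : ℍ | ‖(z : ℂ) - (((a j + b j) / 2 : ℝ) : ℂ)‖ = (b j - a j) / 2}))) ∧
      (∑' j : ℕ, Real.exp (-(Metric.infDist UpperHalfPlane.I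
          {z : ℍ | ‖(z : ℂ) - (((a j + b j) / 2 : ℝ) : ℂ)‖ = (b j - a j) / 2}))) ≤
        C := by
  refine ⟨π, fun a b hab _ hdisj => ?_⟩
  have hmono : ∀ j, arctan (a j) ≤ arctan (b j) :=
    fun j => arctan_strictMono.monotone (hab j).le
  have hbound := sum_sub_le_of_pairwise_disjoint_Ioo (a := arctan ∘ a) (b := arctan ∘ b)
    (by linarith [pi_pos]) hmono (fun j => (arctan_mem_Ioo _).1.le)
    (fun j => (arctan_mem_Ioo _).2.le)
    (fun i j hij => arctan_strictMono.monotone.disjoint_Ioo (hdisj hij))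
  have hsum : Summable fun j => arctan (b j) - arctan (a j) :=
    summable_of_sum_le (fun j => sub_nonneg.2 (hmono j)) hbound
  have hle := fun j => UpperHalfPlane.exp_neg_infDist_I_geodesic_le (hab j)
  have hsum_exp := hsum.of_nonneg_of_le (fun _ => (exp_pos _).le) hle
  refine ⟨hsum_exp, ?_⟩
  calc _ ≤ ∑' j, (arctan (b j) - arctan (a j)) := hsum_exp.tsum_le_tsum hle hsum
    _ ≤ π / 2 - -(π / 2) := tsum_le_of_sum_le (fun j => sub_nonneg.2 (hmono j)) hbound
    _ = π := by ring
end
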